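/- Suppose y* ∈ {0,1}ⁿ satisfies a finite family of valid feasibility cuts γ_r − β_rᵀ y ≤ M_r z_{s(r)} for all r, together with the knapsack constraint ∑_s p_s z_s ≤ α, where for each scenario s the cuts with z_s = 0 fully describe the set Y_s of y feasible for scenario s (as in Theorem 1). Then ∑_{s : y* ∉ Y_s} p_s ≤ α; that is, the chance constraint holds: the total probability of scenarios for which y* is infeasible is at most α. -/
import Mathlib


open Classical in
/-- if `(y*, z)` satisfies the knapsack constraint
`∑ s, p_s z_s ≤ α` together with all feasibility cuts
`γ_{s,r} - β_{s,r}ᵀ y* ≤ M_{s,r} z_s`, where for each scenario `s` the cuts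
with `z_s = 0` exactly describe the feasible set `Y_s` over binary vectors,
then the chance constraint holds: `∑_{s : y* ∉ Y_s} p_s ≤ α`. -/
theorem stmt17 (n S : ℕ) (p : Fin S → ℝ) (hp : ∀ s, 0 < p s)
    (hpsum : ∑ s, p s = 1) (α : ℝ)
    (Y : Fin S → Set (Fin n → ℝ)) (m : Fin S → ℕ)
    (γ : (s : Fin S) → Fin (m s) → ℝ)
    (β : (s : Fin S) → Fin (m s) → Fin n → ℝ)
    (M : (s : Fin S) → Fin (m s) → ℝ) (hM : ∀ s r, 0 < M s r)
    (hdesc : ∀ s, ∀ yv : Fin n → ℝ, (∀ i, yv i = 0 ∨ yv i = 1) →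
      (yv ∈ Y s ↔ ∀ r, 0 ≥ γ s r - ∑ i, β s r i * yv i))
    (ystar : Fin n → ℝ) (hystar : ∀ i, ystar i = 0 ∨ ystar i = 1)
    (z : Fin S → Bool)
    (hknap : (∑ s, if z s then p s else 0) ≤ α)
    (hcuts : ∀ s r, γ s r - ∑ i, β s r i * ystar i ≤
      M s r * (if z s then 1 else 0)) :
    (∑ s, if ystar ∈ Y s then 0 else p s) ≤ α := by
  refine le_trans (Finset.sum_le_sum fun s _ => ?_) hknap
  by_cases hz : z s
  · simp [hz]
    split <;> [linarith [hp s]; exact le_refl _]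
  · have hmem : ystar ∈ Y s := by
      rw [hdesc s ystar hystar]
      intro r
      have := hcuts s r
      simp [hz] at this
      linarith
    simp [hmem, hz]
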